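/- Let A ∈ M_n(ℂ) be symmetric (Aᵀ = A) or skew-symmetric (Aᵀ = −A). Then every X ∈ M_n(ℂ) satisfying Xᵀ A X = A is invertible (i.e. Sol_A is a group) if and only if A is invertible. -/
import Mathlib


open Matrix

lemma vecMulVec_mul' {m : ℕ} (w v : Fin m → ℂ) (A : Matrix (Fin m) (Fin m) ℂ) :
    vecMulVec w v * A = vecMulVec w (v ᵥ* A) := by
  ext i j
  simp [mul_apply, vecMulVec_apply, vecMul, dotProduct, Finset.mul_sum, mul_assoc]

lemma mul_vecMulVec' {m : ℕ} (w v : Fin m → ℂ) (A : Matrix (Fin m) (Fin m) ℂ) :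
    A * vecMulVec v w = vecMulVec (A *ᵥ v) w := by
  ext i j
  simp [mul_apply, vecMulVec_apply, mulVec, dotProduct, Finset.sum_mul, mul_assoc]

lemma transpose_vecMulVec' {m : ℕ} (w v : Fin m → ℂ) :
    (vecMulVec w v)ᵀ = vecMulVec v w := by
  ext i j
  simp [vecMulVec_apply, mul_comm]

/-- For a symmetric or skew-symmetric complex matrix `A`, `Sol_A` is a group
iff `A` is invertible. -/
theorem stmt_7 (n : ℕ) (A : Matrix (Fin n) (Fin n) ℂ) (hA : Aᵀ = A ∨ Aᵀ = -A) :
    (∀ X : Matrix (Fin n) (Fin n) ℂ, Xᵀ * A * X = A → IsUnit X) ↔ IsUnit A := by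
  constructor
  · intro h
    by_contra hAu
    -- A singular: find v ≠ 0 with A v = 0
    have hdet : A.det = 0 := by
      by_contra hd
      exact hAu ((isUnit_iff_isUnit_det A).2 (isUnit_iff_ne_zero.2 hd))
    obtain ⟨v, hv, hAv⟩ := (Matrix.exists_mulVec_eq_zero_iff).2 hdet
    have hvA : v ᵥ* A = 0 := by
      rw [← mulVec_transpose]
      rcases hA with h1 | h1
      · rw [h1, hAv]
      · rw [h1, neg_mulVec, hAv, neg_zero]
    obtain ⟨i, hi⟩ := Function.ne_iff.mp hv
    simp only [Pi.zero_apply] at hi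
    set w : Fin n → ℂ := fun j => if j = i then (v i)⁻¹ else 0 with hw
    set X : Matrix (Fin n) (Fin n) ℂ := 1 - vecMulVec v w with hX
    have hsol : Xᵀ * A * X = A := by
      have h1 : vecMulVec w (0 : Fin n → ℂ) = 0 := by ext i j; simp [vecMulVec_apply]
      have h2 : vecMulVec (0 : Fin n → ℂ) w = 0 := by ext i j; simp [vecMulVec_apply]
      rw [hX, transpose_sub, transpose_one, transpose_vecMulVec',
        sub_mul, one_mul, vecMulVec_mul' w v A, hvA, h1, sub_zero,
        mul_sub, mul_one, mul_vecMulVec' w v A, hAv, h2, sub_zero]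
    have hXv : X *ᵥ v = 0 := by
      rw [hX, sub_mulVec]
      have : vecMulVec v w *ᵥ v = v := by
        ext j
        simp [vecMulVec_apply, mulVec, dotProduct, hw, Finset.sum_ite_eq',
          mul_comm]
        field_simp
      rw [this]
      simp
    have hXu := h X hsol
    have : X.det ≠ 0 := by
      intro hd
      exact (isUnit_iff_ne_zero.1 ((isUnit_iff_isUnit_det X).1 hXu)) hd
    exact this ((Matrix.exists_mulVec_eq_zero_iff).1 ⟨v, hv, hXv⟩)
  · intro hAu X hX
    have hd : X.det * X.det * A.det = A.det := by
      have := congrArg Matrix.det hX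
      simpa [det_mul, det_transpose, mul_comm, mul_assoc, mul_left_comm] using this
    have hAd : A.det ≠ 0 := isUnit_iff_ne_zero.1 ((isUnit_iff_isUnit_det A).1 hAu)
    have hXd : X.det ≠ 0 := by
      intro h0
      rw [h0] at hd
      simp at hd
      exact hAd hd.symm
    exact (isUnit_iff_isUnit_det X).2 (isUnit_iff_ne_zero.2 hXd)
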